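/- If R ⊂ SL_n(I_S)\SL_n(K_S) is relatively compact, then there exists ε > 0 such that ‖ξg‖ ≥ ε for every g ∈ SL_n(K_S) with [g] ∈ R and every nonzero ξ ∈ I_S^n. -/

import Mathlib

open MeasureTheory
open scoped BigOperators ENNReal NNReal

section SAdic

variable {Sr Sc Sf : Type} [Fintype Sr] [Fintype Sc] [Fintype Sf]

/-- The completion of a global field at a place in `S = Sr ⊕ Sc ⊕ Sf`:
`ℝ` at real places, `ℂ` at complex places, and a non-archimedean local field
`Kf v` at the finite places. -/
@[reducible] def PlaceField (Kf : Sf → Type) : Sr ⊕ Sc ⊕ Sf → Type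
  | .inl _ => ℝ
  | .inr (.inl _) => ℂ
  | .inr (.inr v) => Kf v

variable (Kf : Sf → Type) [∀ v, NontriviallyNormedField (Kf v)]

noncomputable instance : ∀ v : Sr ⊕ Sc ⊕ Sf, Field (PlaceField (Sr := Sr) (Sc := Sc) Kf v)
  | .inl _ => inferInstanceAs (Field ℝ)
  | .inr (.inl _) => inferInstanceAs (Field ℂ)
  | .inr (.inr v) => inferInstanceAs (Field (Kf v))

noncomputable instance : ∀ v : Sr ⊕ Sc ⊕ Sf, TopologicalSpace (PlaceField (Sr := Sr) (Sc := Sc) Kf v)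
  | .inl _ => inferInstanceAs (TopologicalSpace ℝ)
  | .inr (.inl _) => inferInstanceAs (TopologicalSpace ℂ)
  | .inr (.inr v) => inferInstanceAs (TopologicalSpace (Kf v))

variable [∀ v, MeasurableSpace (Kf v)]

instance : ∀ v : Sr ⊕ Sc ⊕ Sf, MeasurableSpace (PlaceField (Sr := Sr) (Sc := Sc) Kf v)
  | .inl _ => inferInstanceAs (MeasurableSpace ℝ)
  | .inr (.inl _) => inferInstanceAs (MeasurableSpace ℂ)
  | .inr (.inr v) => inferInstanceAs (MeasurableSpace (Kf v))

/-- The normalized norm on `K_v^n`: the Euclidean norm at real places, the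
*square* of the Euclidean norm at complex places, and the sup norm at
non-archimedean places. -/
noncomputable def placeNorm (n : ℕ) :
    ∀ v : Sr ⊕ Sc ⊕ Sf, (Fin n → PlaceField (Sr := Sr) (Sc := Sc) Kf v) → ℝ
  | .inl _ => fun x => Real.sqrt (∑ i, x i ^ 2)
  | .inr (.inl _) => fun x => ∑ i, ‖(x i : ℂ)‖ ^ 2
  | .inr (.inr _) => fun x => ⨆ i, ‖x i‖

/-- The norm `‖ξ‖ = max_{v∈S} ‖ξ_v‖_v` on `K_S^n`. -/
noncomputable def SNorm {n : ℕ}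
    (ξ : Fin n → ∀ v : Sr ⊕ Sc ⊕ Sf, PlaceField (Sr := Sr) (Sc := Sc) Kf v) : ℝ :=
  ⨆ v, placeNorm Kf n v (fun i => ξ i v)

/-- The content `cont(ξ) = ∏_{v∈S} ‖ξ_v‖_v` on `K_S^n`. -/
noncomputable def SCont {n : ℕ}
    (ξ : Fin n → ∀ v : Sr ⊕ Sc ⊕ Sf, PlaceField (Sr := Sr) (Sc := Sc) Kf v) : ℝ :=
  ∏ v, placeNorm Kf n v (fun i => ξ i v)

/-- The open ball `B_r(K_S^n)` of radius `r` centred at `0`. -/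
noncomputable def SBall (n : ℕ) (r : ℝ) :
    Set (Fin n → ∀ v : Sr ⊕ Sc ⊕ Sf, PlaceField (Sr := Sr) (Sc := Sc) Kf v) :=
  {ξ | SNorm Kf ξ < r}

variable (μf : ∀ v, Measure (Kf v))

/-- The normalized Haar measure on `K_v`: Lebesgue measure at real and complex
places, the given Haar measure `μf v` (normalized by `μf v (I_v) = 1`) at the
finite places. -/
noncomputable def placeMeasure :
    ∀ v : Sr ⊕ Sc ⊕ Sf, Measure (PlaceField (Sr := Sr) (Sc := Sc) Kf v)
  | .inl _ => volume
  | .inr (.inl _) => volume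
  | .inr (.inr v) => μf v

def placeMeasureSigmaFinite [∀ v, SigmaFinite (μf v)] :
    ∀ v : Sr ⊕ Sc ⊕ Sf, SigmaFinite (placeMeasure (Sr := Sr) (Sc := Sc) Kf μf v)
  | .inl _ => inferInstanceAs (SigmaFinite (volume : Measure ℝ))
  | .inr (.inl _) => inferInstanceAs (SigmaFinite (volume : Measure ℂ))
  | .inr (.inr v) => inferInstanceAs (SigmaFinite (μf v))

/-- The normalized Haar measure `vol` on `K_S^n`, the product of the
normalized measures at the places of `S`. -/
noncomputable def SVol [∀ v, SigmaFinite (μf v)] (n : ℕ) :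
    Measure (Fin n → ∀ v : Sr ⊕ Sc ⊕ Sf, PlaceField (Sr := Sr) (Sc := Sc) Kf v) :=
  haveI := placeMeasureSigmaFinite Kf μf
  Measure.pi fun _ => Measure.pi (placeMeasure Kf μf)


variable {K : Type} [Field K]

/-- `K`-linear independence (via the diagonal embedding of `K` in `K_S`) of a
family of vectors in `K_S^n`. -/
def KIndep (ι : ∀ v : Sr ⊕ Sc ⊕ Sf, K →+* PlaceField (Sr := Sr) (Sc := Sc) Kf v)
    {n m : ℕ} (f : Fin m → (Fin n → ∀ v, PlaceField (Sr := Sr) (Sc := Sc) Kf v)) : Prop :=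
  ∀ c : Fin m → K, (∑ i, (fun j v => ι v (c i) * f i j v)) = 0 → ∀ i, c i = 0

/-- `K_S`-linear independence of a family of vectors in `K_S^n`. -/
def KSIndep {n m : ℕ}
    (f : Fin m → (Fin n → ∀ v, PlaceField (Sr := Sr) (Sc := Sc) Kf v)) : Prop :=
  ∀ c : Fin m → (∀ v, PlaceField (Sr := Sr) (Sc := Sc) Kf v),
    (∑ i, (fun j v => c i v * f i j v)) = 0 → ∀ i, c i = 0

/-- The `m`-th successive minimum of `Γ ⊆ K_S^n`:
`ι_m = inf {r > 0 : dim_K span_K (B_r(K_S^n) ∩ Γ) ≥ m}`, expressed via the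
existence of `m` vectors of `Γ ∩ B_r` that are linearly independent over `K`. -/
noncomputable def sMinimum
    (ι : ∀ v : Sr ⊕ Sc ⊕ Sf, K →+* PlaceField (Sr := Sr) (Sc := Sc) Kf v)
    {n : ℕ} (Γ : Set (Fin n → ∀ v, PlaceField (Sr := Sr) (Sc := Sc) Kf v))
    (m : ℕ) : ℝ :=
  sInf {r : ℝ | 0 < r ∧ ∃ f : Fin m → (Fin n → ∀ v, PlaceField (Sr := Sr) (Sc := Sc) Kf v),
    (∀ i, f i ∈ Γ ∧ SNorm Kf (f i) < r) ∧ KIndep Kf ι f}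

/-- The normalized absolute value on `K_v`: the usual absolute value at real
places, the *square* of the usual absolute value at complex places, and the
norm at non-archimedean places. -/
noncomputable def placeAbs :
    ∀ v : Sr ⊕ Sc ⊕ Sf, PlaceField (Sr := Sr) (Sc := Sc) Kf v → ℝ
  | .inl _ => fun x => |x|
  | .inr (.inl _) => fun x => ‖(x : ℂ)‖ ^ 2
  | .inr (.inr _) => fun x => ‖x‖

/-- The covering radius of `Γ ⊆ K_S^n`:
`inf {r > 0 : B_r(K_S^n) + Γ = K_S^n}`. -/
noncomputable def covRadius {n : ℕ}
    (Γ : Set (Fin n → ∀ v, PlaceField (Sr := Sr) (Sc := Sc) Kf v)) : ℝ :=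
  sInf {r : ℝ | 0 < r ∧
    ∀ x : Fin n → ∀ v, PlaceField (Sr := Sr) (Sc := Sc) Kf v,
      ∃ γ ∈ Γ, SNorm Kf (x - γ) < r}

end SAdic

/-- Membership in `SL_n(I_S)`, diagonally embedded in `SL_n(K_S)`:
the matrix has entries coming from a matrix over the `S`-integers `R ⊆ K`
of determinant `1`. -/
def IsSLIS {Sr Sc Sf : Type} (Kf : Sf → Type) [∀ v, NontriviallyNormedField (Kf v)]
    {K : Type} [Field K]
    (ι : ∀ v : Sr ⊕ Sc ⊕ Sf, K →+* PlaceField (Sr := Sr) (Sc := Sc) Kf v)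
    (R : Subring K) {n : ℕ}
    (g : Matrix (Fin n) (Fin n) (∀ v, PlaceField (Sr := Sr) (Sc := Sc) Kf v)) : Prop :=
  ∃ A : Matrix (Fin n) (Fin n) K, (∀ i j, A i j ∈ R) ∧ A.det = 1 ∧
    ∀ i j, g i j = fun v => ι v (A i j)

/-!
If `[g]` lies in the image of a compact set `C`, write `h * g = c ∈ C` with `h ∈ SL_n(I_S)`. Then
`ξ g = η c` with `η = ξ h⁻¹ ∈ I_S^n ∖ {0}`, and `η = (η c) · adj c`. A nonzero coordinate of `η`
is bounded below at some place by the discreteness of `I_S` in `K_S`, while the entries of `adj c`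
are bounded on `C`; hence `‖ξ g‖ = ‖η c‖` is bounded below.
-/

section PlaceNorms

variable {Sr Sc Sf : Type} (Kf : Sf → Type) [∀ v, NontriviallyNormedField (Kf v)]

instance : ∀ v : Sr ⊕ Sc ⊕ Sf, IsTopologicalRing (PlaceField (Sr := Sr) (Sc := Sc) Kf v)
  | .inl _ => inferInstanceAs (IsTopologicalRing ℝ)
  | .inr (.inl _) => inferInstanceAs (IsTopologicalRing ℂ)
  | .inr (.inr v) => inferInstanceAs (IsTopologicalRing (Kf v))

theorem placeAbs_nonneg :
    ∀ (v : Sr ⊕ Sc ⊕ Sf) (x : PlaceField (Sr := Sr) (Sc := Sc) Kf v), 0 ≤ placeAbs Kf v x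
  | .inl _, x => abs_nonneg x
  | .inr (.inl _), _ => sq_nonneg _
  | .inr (.inr _), x => norm_nonneg x

theorem placeAbs_mul :
    ∀ (v : Sr ⊕ Sc ⊕ Sf) (x y : PlaceField (Sr := Sr) (Sc := Sc) Kf v),
      placeAbs Kf v (x * y) = placeAbs Kf v x * placeAbs Kf v y
  | .inl _, x, y => abs_mul x y
  | .inr (.inl _), x, y => by
      change ‖(x * y : ℂ)‖ ^ 2 = ‖(x : ℂ)‖ ^ 2 * ‖(y : ℂ)‖ ^ 2
      rw [norm_mul, mul_pow]
  | .inr (.inr _), x, y => norm_mul x y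

theorem continuous_placeAbs :
    ∀ v : Sr ⊕ Sc ⊕ Sf, Continuous (placeAbs (Sr := Sr) (Sc := Sc) Kf v)
  | .inl _ => continuous_abs
  | .inr (.inl _) => (continuous_norm (E := ℂ)).pow 2
  | .inr (.inr _) => continuous_norm

theorem Finset.sum_le_card_mul_sum {ι : Type*} [Fintype ι] {f : ι → ℝ} (hf : ∀ i, 0 ≤ f i) :
    ∑ i, f i ≤ Fintype.card ι * ∑ i, f i := by
  rcases isEmpty_or_nonempty ι with hι | hι
  · simp
  · exact le_mul_of_one_le_left (Finset.sum_nonneg fun i _ => hf i)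
      (by exact_mod_cast Fintype.card_pos)

/-- The triangle inequality up to the factor `m`, which the squared absolute value at complex
places needs (by Cauchy–Schwarz). -/
theorem placeAbs_sum_le :
    ∀ (v : Sr ⊕ Sc ⊕ Sf) {m : ℕ} (x : Fin m → PlaceField (Sr := Sr) (Sc := Sc) Kf v),
      placeAbs Kf v (∑ j, x j) ≤ m * ∑ j, placeAbs Kf v (x j)
  | .inl _, m, x => by
      change |∑ j, x j| ≤ m * ∑ j, |x j|
      simpa using (Finset.abs_sum_le_sum_abs _ _).trans
        (Finset.sum_le_card_mul_sum fun j => abs_nonneg (x j))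
  | .inr (.inl _), m, x => by
      change ‖(∑ j, x j : ℂ)‖ ^ 2 ≤ m * ∑ j, ‖(x j : ℂ)‖ ^ 2
      calc ‖(∑ j, x j : ℂ)‖ ^ 2 ≤ (∑ j, ‖(x j : ℂ)‖) ^ 2 := by gcongr; exact norm_sum_le _ _
        _ ≤ m * ∑ j, ‖(x j : ℂ)‖ ^ 2 := by
          simpa using sq_sum_le_card_mul_sum_sq (s := Finset.univ) (f := fun j => ‖(x j : ℂ)‖)
  | .inr (.inr _), m, x => by
      change ‖∑ j, x j‖ ≤ m * ∑ j, ‖x j‖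
      simpa using (norm_sum_le _ _).trans (Finset.sum_le_card_mul_sum fun j => norm_nonneg (x j))

theorem placeAbs_le_placeNorm :
    ∀ (v : Sr ⊕ Sc ⊕ Sf) {m : ℕ} (x : Fin m → PlaceField (Sr := Sr) (Sc := Sc) Kf v) (i : Fin m),
      placeAbs Kf v (x i) ≤ placeNorm Kf m v x
  | .inl _, m, x, i => by
      change |x i| ≤ Real.sqrt (∑ j, x j ^ 2)
      rw [← Real.sqrt_sq_eq_abs]
      exact Real.sqrt_le_sqrt <|
        Finset.single_le_sum (f := fun j => x j ^ 2) (fun j _ => sq_nonneg _) (Finset.mem_univ i)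
  | .inr (.inl _), m, x, i =>
      Finset.single_le_sum (f := fun j => ‖(x j : ℂ)‖ ^ 2) (fun j _ => sq_nonneg _)
        (Finset.mem_univ i)
  | .inr (.inr _), m, x, i =>
      le_ciSup (f := fun j => ‖x j‖) (Set.finite_range _).bddAbove i

theorem placeNorm_nonneg :
    ∀ (v : Sr ⊕ Sc ⊕ Sf) {m : ℕ} (x : Fin m → PlaceField (Sr := Sr) (Sc := Sc) Kf v),
      0 ≤ placeNorm Kf m v x
  | .inl _, _, _ => Real.sqrt_nonneg _
  | .inr (.inl _), _, _ => Finset.sum_nonneg fun _ _ => sq_nonneg _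
  | .inr (.inr _), _, _ => Real.iSup_nonneg fun _ => norm_nonneg _

theorem SNorm_nonneg {n : ℕ} (ξ : Fin n → ∀ v, PlaceField (Sr := Sr) (Sc := Sc) Kf v) :
    0 ≤ SNorm Kf ξ :=
  Real.iSup_nonneg fun v => placeNorm_nonneg Kf v _

theorem placeNorm_le_SNorm [Finite Sr] [Finite Sc] [Finite Sf] {n : ℕ}
    (ξ : Fin n → ∀ v, PlaceField (Sr := Sr) (Sc := Sc) Kf v) (v : Sr ⊕ Sc ⊕ Sf) :
    placeNorm Kf n v (fun i => ξ i v) ≤ SNorm Kf ξ :=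
  le_ciSup (f := fun v => placeNorm Kf n v (fun i => ξ i v)) (Set.finite_range _).bddAbove v

theorem placeAbs_vecMul_le [Finite Sr] [Finite Sc] [Finite Sf] {n : ℕ}
    (ζ : Fin n → ∀ v, PlaceField (Sr := Sr) (Sc := Sc) Kf v)
    (B : Matrix (Fin n) (Fin n) (∀ v, PlaceField (Sr := Sr) (Sc := Sc) Kf v))
    (v : Sr ⊕ Sc ⊕ Sf) {M : ℝ} (hB : ∀ i j, placeAbs Kf v (B i j v) ≤ M) (i : Fin n) :
    placeAbs Kf v (Matrix.vecMul ζ B i v) ≤ n ^ 2 * M * SNorm Kf ζ := by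
  have hvecMul : Matrix.vecMul ζ B i v = ∑ j, ζ j v * B j i v := by
    simp [Matrix.vecMul, dotProduct, Finset.sum_apply]
  calc placeAbs Kf v (Matrix.vecMul ζ B i v)
      ≤ n * ∑ j, placeAbs Kf v (ζ j v * B j i v) := hvecMul ▸ placeAbs_sum_le Kf v _
    _ ≤ n * ∑ _j : Fin n, SNorm Kf ζ * M := by
      gcongr with j
      rw [placeAbs_mul]
      exact mul_le_mul ((placeAbs_le_placeNorm Kf v (fun i => ζ i v) j).trans
        (placeNorm_le_SNorm Kf ζ v)) (hB j i) (placeAbs_nonneg Kf v _) (SNorm_nonneg Kf ζ)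
    _ = n ^ 2 * M * SNorm Kf ζ := by
      simp only [Finset.sum_const, Finset.card_univ, Fintype.card_fin, nsmul_eq_mul]
      ring

theorem IsCompact.exists_bound_placeAbs_adjugate [Fintype Sr] [Fintype Sc] [Fintype Sf] {n : ℕ}
    {C : Set (Matrix (Fin n) (Fin n) (∀ v, PlaceField (Sr := Sr) (Sc := Sc) Kf v))}
    (hC : IsCompact C) :
    ∃ M, ∀ c ∈ C, ∀ v i j, placeAbs Kf v (c.adjugate i j v) ≤ M := by
  let F (c : Matrix (Fin n) (Fin n) (∀ v, PlaceField (Sr := Sr) (Sc := Sc) Kf v))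
      (p : (Sr ⊕ Sc ⊕ Sf) × Fin n × Fin n) : ℝ :=
    placeAbs Kf p.1 (c.adjugate p.2.1 p.2.2 p.1)
  have hF : Continuous F := continuous_pi fun p => (continuous_placeAbs Kf p.1).comp <|
    (continuous_apply _).comp <| (continuous_apply _).comp <| (continuous_apply _).comp <|
      continuous_id.matrix_adjugate
  obtain ⟨M, hM⟩ := hC.exists_bound_of_continuousOn hF.continuousOn
  exact ⟨M, fun c hc v i j =>
    (Real.le_norm_self _).trans ((norm_le_pi_norm (F c) (v, i, j)).trans (hM c hc))⟩

theorem Matrix.SpecialLinearGroup.vecMul_vecMul_adjugate {m R : Type*} [Fintype m]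
    [DecidableEq m] [CommRing R] (c : Matrix.SpecialLinearGroup m R) (x : m → R) :
    Matrix.vecMul (Matrix.vecMul x c) (c : Matrix m m R).adjugate = x := by
  rw [← coe_inv, Matrix.vecMul_vecMul, ← coe_mul, mul_inv_cancel, coe_one, Matrix.vecMul_one]

theorem IsCompact.exists_pos_placeAbs_le_SNorm_vecMul [Fintype Sr] [Fintype Sc] [Fintype Sf]
    {n : ℕ} {C : Set (Matrix (Fin n) (Fin n) (∀ v, PlaceField (Sr := Sr) (Sc := Sc) Kf v))}
    (hC : IsCompact C) :
    ∃ B > 0,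
      ∀ c : Matrix.SpecialLinearGroup (Fin n) (∀ v, PlaceField (Sr := Sr) (Sc := Sc) Kf v),
        (c : Matrix (Fin n) (Fin n) _) ∈ C →
        ∀ (x : Fin n → ∀ v, PlaceField (Sr := Sr) (Sc := Sc) Kf v) v i,
          placeAbs Kf v (x i v) ≤
            B * SNorm Kf (Matrix.vecMul x (c : Matrix (Fin n) (Fin n) _)) := by
  obtain ⟨M, hM⟩ := hC.exists_bound_placeAbs_adjugate Kf
  refine ⟨n ^ 2 * max M 0 + 1, by positivity, fun c hc x v i => ?_⟩
  have hx := placeAbs_vecMul_le Kf (Matrix.vecMul x c) _ v (hM c hc v) i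
  rw [c.vecMul_vecMul_adjugate] at hx
  refine hx.trans (mul_le_mul_of_nonneg_right ?_ (SNorm_nonneg Kf _))
  nlinarith [le_max_left M 0, sq_nonneg (n : ℝ)]

end PlaceNorms

theorem Subring.adjugate_mem {K : Type*} [CommRing K] (R : Subring K) {ι : Type*} [Fintype ι]
    [DecidableEq ι] {A : Matrix ι ι K} (hA : ∀ i j, A i j ∈ R) (i j : ι) :
    A.adjugate i j ∈ R := by
  have hA' : A = R.subtype.mapMatrix (Matrix.of fun i j => (⟨A i j, hA i j⟩ : R)) := rfl
  rw [hA', ← RingHom.map_adjugate]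
  exact SetLike.coe_mem _

theorem IsSLIS.exists_vecMul_eq_vecMul_mul {Sr Sc Sf : Type} {Kf : Sf → Type}
    [∀ v, NontriviallyNormedField (Kf v)] {K : Type} [Field K]
    {ι : ∀ v : Sr ⊕ Sc ⊕ Sf, K →+* PlaceField (Sr := Sr) (Sc := Sc) Kf v} {R : Subring K} {n : ℕ}
    {h : Matrix (Fin n) (Fin n) (∀ v, PlaceField (Sr := Sr) (Sc := Sc) Kf v)}
    (hh : IsSLIS Kf ι R h) {ξ : Fin n → K} (hξR : ∀ i, ξ i ∈ R) (hξ : ξ ≠ 0)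
    (g : Matrix (Fin n) (Fin n) (∀ v, PlaceField (Sr := Sr) (Sc := Sc) Kf v)) :
    ∃ η : Fin n → K, (∀ i, η i ∈ R) ∧ η ≠ 0 ∧
      Matrix.vecMul (fun i v => ι v (ξ i)) g = Matrix.vecMul (fun i v => ι v (η i)) (h * g) := by
  obtain ⟨A, hAR, hAdet, hAh⟩ := hh
  have hhA : h = A.map (RingHom.pi ι) := Matrix.ext hAh
  set η := Matrix.vecMul ξ A.adjugate
  have hηR (j : Fin n) : η j ∈ R :=
    R.sum_mem (t := Finset.univ) (f := fun i => ξ i * A.adjugate i j) fun i _ =>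
      R.mul_mem (hξR i) (R.adjugate_mem hAR i j)
  have hηA : Matrix.vecMul η A = ξ := by
    rw [Matrix.vecMul_vecMul, Matrix.adjugate_mul, hAdet, one_smul, Matrix.vecMul_one]
  refine ⟨η, hηR, fun hη => hξ (by rw [← hηA, hη, Matrix.zero_vecMul]), ?_⟩
  calc Matrix.vecMul (fun i v => ι v (ξ i)) g
      = Matrix.vecMul (Matrix.vecMul (RingHom.pi ι ∘ η) (A.map (RingHom.pi ι))) g := by
        congr 1
        funext j
        rw [← RingHom.map_vecMul, hηA]
        rfl
    _ = _ := by rw [Matrix.vecMul_vecMul, hhA]; rfl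

theorem mahler_criterion_necessity_general
    {Sr Sc Sf : Type} [Fintype Sr] [Fintype Sc] [Fintype Sf]
    (Kf : Sf → Type) [∀ v, NontriviallyNormedField (Kf v)]
    {K : Type} [Field K]
    (ι : ∀ v : Sr ⊕ Sc ⊕ Sf, K →+* PlaceField (Sr := Sr) (Sc := Sc) Kf v)
    (R : Subring K)
    (hRdisc : ∃ ε > (0:ℝ), ∀ a ∈ R, a ≠ 0 →
      ε ≤ ⨆ v, placeAbs (Sr := Sr) (Sc := Sc) Kf v (ι v a))
    {n : ℕ}
    (T : Set (Matrix.SpecialLinearGroup (Fin n) (∀ v, PlaceField (Sr := Sr) (Sc := Sc) Kf v)))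
    (hTcpt : ∃ C : Set (Matrix (Fin n) (Fin n) (∀ v, PlaceField (Sr := Sr) (Sc := Sc) Kf v)),
      IsCompact C ∧ ∀ g ∈ T,
        ∃ h : Matrix.SpecialLinearGroup (Fin n) (∀ v, PlaceField (Sr := Sr) (Sc := Sc) Kf v),
          IsSLIS Kf ι R (h : Matrix (Fin n) (Fin n) _) ∧
          ((h * g : Matrix.SpecialLinearGroup (Fin n) _) : Matrix (Fin n) (Fin n) _) ∈ C) :
    ∃ ε > (0:ℝ), ∀ g ∈ T, ∀ ξ : Fin n → K, (∀ i, ξ i ∈ R) → ξ ≠ 0 →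
      ε ≤ SNorm (Sr := Sr) (Sc := Sc) Kf
        (Matrix.vecMul (fun i v => ι v (ξ i))
          (g : Matrix (Fin n) (Fin n) (∀ v, PlaceField (Sr := Sr) (Sc := Sc) Kf v))) := by
  obtain ⟨ε₀, hε₀, hdisc⟩ := hRdisc
  obtain ⟨C, hC, hCT⟩ := hTcpt
  obtain ⟨B, hB, hbound⟩ := hC.exists_pos_placeAbs_le_SNorm_vecMul Kf
  refine ⟨ε₀ / B, div_pos hε₀ hB, fun g hg ξ hξR hξ => ?_⟩
  obtain ⟨h, hh, hc⟩ := hCT g hg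
  obtain ⟨η, hηR, hη, hξη⟩ := hh.exists_vecMul_eq_vecMul_mul hξR hξ g
  obtain ⟨i, hi⟩ := Function.ne_iff.mp hη
  rw [hξη, ← Matrix.SpecialLinearGroup.coe_mul, div_le_iff₀' hB]
  exact (hdisc _ (hηR i) hi).trans <| Real.iSup_le (fun v => hbound _ hc (fun j v => ι v (η j)) v i)
    (mul_nonneg hB.le (SNorm_nonneg Kf _))

/-- **Easy direction of the S-adic Mahler compactness criterion.**
`T ⊆ SL_n(K_S)` is a left-`SL_n(I_S)`-invariant set whose image in the
quotient `SL_n(I_S)\SL_n(K_S)` is relatively compact (it is contained in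
`SL_n(I_S)·C` for a compact set `C`).  Then the nonzero vectors `ξ·g`, for
`ξ ∈ I_S^n ∖ {0}` and `g ∈ T`, are uniformly separated from `0`. -/
theorem mahler_criterion_necessity
    {Sr Sc Sf : Type} [Fintype Sr] [Fintype Sc] [Fintype Sf]
    [Nonempty (Sr ⊕ Sc ⊕ Sf)]
    (Kf : Sf → Type) [∀ v, NontriviallyNormedField (Kf v)]
    [∀ v, IsUltrametricDist (Kf v)] [∀ v, CompleteSpace (Kf v)]
    [∀ v, MeasurableSpace (Kf v)] [∀ v, BorelSpace (Kf v)]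
    [∀ v, LocallyCompactSpace (Kf v)]
    (μf : ∀ v, Measure (Kf v)) [∀ v, SigmaFinite (μf v)]
    [∀ v, (μf v).IsAddHaarMeasure]
    (hnormμ : ∀ v, μf v (Metric.closedBall 0 1) = 1)
    (q : Sf → ℕ) (hq : ∀ v, 1 < q v)
    (hϖ : ∀ v, ∃ ϖ : Kf v, ‖ϖ‖ = ((q v : ℝ))⁻¹)
    (hval : ∀ v, ∀ x : Kf v, x ≠ 0 → ∃ k : ℤ, ‖x‖ = (q v : ℝ) ^ k)
    {K : Type} [Field K]
    (ι : ∀ v : Sr ⊕ Sc ⊕ Sf, K →+* PlaceField (Sr := Sr) (Sc := Sc) Kf v)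
    (hdense : ∀ v, DenseRange (ι v))
    (R : Subring K)
    (hRdisc : ∃ ε > (0:ℝ), ∀ a ∈ R, a ≠ 0 →
      ε ≤ ⨆ v, placeAbs (Sr := Sr) (Sc := Sc) Kf v (ι v a))
    (hRcc : ∃ B : ℝ, ∀ x : ∀ v, PlaceField (Sr := Sr) (Sc := Sc) Kf v,
      ∃ a ∈ R, (⨆ v, placeAbs (Sr := Sr) (Sc := Sc) Kf v (x v - ι v a)) ≤ B)
    {n : ℕ}
    (T : Set (Matrix.SpecialLinearGroup (Fin n) (∀ v, PlaceField (Sr := Sr) (Sc := Sc) Kf v)))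
    (hTinv : ∀ g ∈ T, ∀ h : Matrix.SpecialLinearGroup (Fin n)
        (∀ v, PlaceField (Sr := Sr) (Sc := Sc) Kf v),
      IsSLIS Kf ι R (h : Matrix (Fin n) (Fin n) _) → h * g ∈ T)
    (hTcpt : ∃ C : Set (Matrix (Fin n) (Fin n) (∀ v, PlaceField (Sr := Sr) (Sc := Sc) Kf v)),
      IsCompact C ∧ ∀ g ∈ T,
        ∃ h : Matrix.SpecialLinearGroup (Fin n) (∀ v, PlaceField (Sr := Sr) (Sc := Sc) Kf v),
          IsSLIS Kf ι R (h : Matrix (Fin n) (Fin n) _) ∧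
          ((h * g : Matrix.SpecialLinearGroup (Fin n) _) : Matrix (Fin n) (Fin n) _) ∈ C) :
    ∃ ε > (0:ℝ), ∀ g ∈ T, ∀ ξ : Fin n → K, (∀ i, ξ i ∈ R) → ξ ≠ 0 →
      ε ≤ SNorm (Sr := Sr) (Sc := Sc) Kf
        (Matrix.vecMul (fun i v => ι v (ξ i))
          (g : Matrix (Fin n) (Fin n) (∀ v, PlaceField (Sr := Sr) (Sc := Sc) Kf v))) :=
  mahler_criterion_necessity_general Kf ι R hRdisc T hTcpt
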